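/- arXiv:2307.09718 — 2 statements merged into one kernel-verified Lean document; each statement's English description precedes it below -/
import Mathlib

section
/- Let G be a finite group and let H₁ and H₂ be almost conjugate subgroups of G. Let k be a field of characteristic zero and let V be a representation of G over k. Then there exists a k-linear isomorphism i : V^{H₁} → V^{H₂} between the subspaces of H₁-invariants and H₂-invariants which commutes with the action of every k-linear endomorphism Δ of V that commutes with the action of G on V; that is, for every such Δ (which necessarily maps V^{H₁} to V^{H₁} and V^{H₂} to V^{H₂}), one has i ∘ (Δ restricted to V^{H₁}) = (Δ restricted to V^{H₂}) ∘ i. -/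
/-- Two subgroups `H₁, H₂` of a finite group `G` are almost conjugate if every conjugacy
class of `G` meets them in the same number of elements. -/
def AlmostConjugate {G : Type*} [Group G] (H₁ H₂ : Subgroup G) : Prop :=
  ∀ g : G, Nat.card {x : G // x ∈ H₁ ∧ IsConj g x} = Nat.card {x : G // x ∈ H₂ ∧ IsConj g x}

/-- The subspace of `H`-invariants of a representation `ρ` of `G`, for a subgroup `H ≤ G`. -/
noncomputable def subInvariants {k G V : Type*} [CommRing k] [Group G] [AddCommGroup V] [Module k V]
    (ρ : Representation k G V) (H : Subgroup G) : Submodule k V :=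
  Representation.invariants (ρ.comp H.subtype)

open Module LinearMap MonoidAlgebra Finset



section HomSpaces

universe uA

variable {k : Type*} [Field k] {A : Type uA} [Ring A] [Algebra k A]

theorem fd_homA (M X : Type*) [AddCommGroup M] [Module k M] [Module A M] [IsScalarTower k A M]
    [AddCommGroup X] [Module k X] [Module A X] [IsScalarTower k A X]
    [FiniteDimensional k M] [FiniteDimensional k X] : FiniteDimensional k (M →ₗ[A] X) :=
  FiniteDimensional.of_injective (LinearMap.restrictScalarsₗ k A M X k)
    (LinearMap.restrictScalars_injective k)

/-- precomposition with an `A`-linear equiv gives a `k`-linear equiv of hom spaces -/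
def homCongrLeft {M N : Type*} (X : Type*)
    [AddCommGroup M] [Module A M] [AddCommGroup N] [Module A N]
    [AddCommGroup X] [Module k X] [Module A X] [IsScalarTower k A X]
    (e : M ≃ₗ[A] N) : (N →ₗ[A] X) ≃ₗ[k] (M →ₗ[A] X) where
  toFun f := f ∘ₗ (e : M →ₗ[A] N)
  invFun g := g ∘ₗ (e.symm : N →ₗ[A] M)
  map_add' f g := LinearMap.add_comp _ _ _
  map_smul' c f := LinearMap.smul_comp _ _ _
  left_inv f := by ext x; simp
  right_inv g := by ext x; simp

theorem finrank_hom_prod_eq {S T M : Type*} (X : Type*)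
    [AddCommGroup S] [Module k S] [Module A S] [IsScalarTower k A S] [FiniteDimensional k S]
    [AddCommGroup T] [Module k T] [Module A T] [IsScalarTower k A T] [FiniteDimensional k T]
    [AddCommGroup M] [Module A M]
    [AddCommGroup X] [Module k X] [Module A X] [IsScalarTower k A X] [FiniteDimensional k X]
    (e : (S × T) ≃ₗ[A] M) :
    finrank k (M →ₗ[A] X) = finrank k (S →ₗ[A] X) + finrank k (T →ₗ[A] X) := by
  haveI := fd_homA (k := k) (A := A) S X
  haveI := fd_homA (k := k) (A := A) T X
  rw [LinearEquiv.finrank_eq (homCongrLeft X e),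
    LinearEquiv.finrank_eq (LinearMap.coprodEquiv k).symm, Module.finrank_prod]

theorem iso_of_subsingleton (M N : Type uA) [AddCommGroup M] [AddCommGroup N]
    [Module k M] [Module A M] [IsScalarTower k A M]
    [Module k N] [Module A N] [IsScalarTower k A N]
    [FiniteDimensional k M] [FiniteDimensional k N] [Subsingleton M]
    (hyp : ∀ (X : Type uA) [AddCommGroup X], ∀ [Module k X] [Module A X] [IsScalarTower k A X],
      ∀ [FiniteDimensional k X], finrank k (M →ₗ[A] X) = finrank k (N →ₗ[A] X)) :
    Nonempty (M ≃ₗ[A] N) := by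
  haveI := fd_homA (k := k) (A := A) M N
  haveI := fd_homA (k := k) (A := A) N N
  haveI hMN : Subsingleton (M →ₗ[A] N) :=
    ⟨fun f g => by ext x; rw [Subsingleton.elim x 0, map_zero, map_zero]⟩
  have h0 : finrank k (N →ₗ[A] N) = 0 := by
    rw [← hyp N]; exact Module.finrank_zero_iff.2 hMN
  haveI hNN : Subsingleton (N →ₗ[A] N) := Module.finrank_zero_iff.1 h0
  haveI : Subsingleton N := by
    refine ⟨fun x y => ?_⟩
    have hx : x = (LinearMap.id : N →ₗ[A] N) x := rfl
    have hy : y = (LinearMap.id : N →ₗ[A] N) y := rfl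
    rw [hx, hy, Subsingleton.elim (LinearMap.id : N →ₗ[A] N) 0]
    simp
  haveI : Subsingleton (M →ₗ[A] M) :=
    ⟨fun f g => by ext x; exact Subsingleton.elim _ _⟩
  haveI : Subsingleton (N →ₗ[A] M) :=
    ⟨fun f g => by ext x; exact Subsingleton.elim _ _⟩
  exact ⟨LinearEquiv.ofLinear 0 0 (Subsingleton.elim _ _) (Subsingleton.elim _ _)⟩

theorem iso_of_hom_finrank (n : ℕ) :
    ∀ (M N : Type uA) [AddCommGroup M] [AddCommGroup N],
    ∀ [Module k M] [Module A M] [IsScalarTower k A M],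
    ∀ [Module k N] [Module A N] [IsScalarTower k A N],
    ∀ [FiniteDimensional k M] [FiniteDimensional k N],
    ∀ [IsSemisimpleModule A M] [IsSemisimpleModule A N],
    finrank k M ≤ n →
    (∀ (X : Type uA) [AddCommGroup X], ∀ [Module k X] [Module A X] [IsScalarTower k A X],
      ∀ [FiniteDimensional k X], finrank k (M →ₗ[A] X) = finrank k (N →ₗ[A] X)) →
    Nonempty (M ≃ₗ[A] N) := by
  induction n with
  | zero =>
    intro M N _ _ _ _ _ _ _ _ _ _ _ _ hle hyp
    haveI : Subsingleton M := by
      rw [← Module.finrank_zero_iff (R := k)]; omega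
    exact iso_of_subsingleton M N hyp
  | succ n ih =>
    intro M N _ _ _ _ _ _ _ _ _ _ _ _ hle hyp
    by_cases hM : Subsingleton M
    · exact iso_of_subsingleton M N hyp
    · haveI : Nontrivial M := not_subsingleton_iff_nontrivial.1 hM
      haveI := fd_homA (k := k) (A := A) M M
      haveI := fd_homA (k := k) (A := A) N M
      have hid : (LinearMap.id : M →ₗ[A] M) ≠ 0 := by
        intro h0
        obtain ⟨x, hx⟩ := exists_ne (0 : M)
        exact hx (by rw [show x = (LinearMap.id : M →ₗ[A] M) x from rfl, h0]; simp)
      have hpos : 0 < finrank k (N →ₗ[A] M) := by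
        rw [← hyp M]
        exact Module.finrank_pos_iff.2 (nontrivial_of_ne _ _ hid)
      haveI : Nontrivial (N →ₗ[A] M) := Module.finrank_pos_iff.1 hpos
      obtain ⟨f, hf⟩ := exists_ne (0 : N →ₗ[A] M)
      have hrange : LinearMap.range f ≠ ⊥ := by
        rw [ne_eq, LinearMap.range_eq_bot]; exact hf
      rcases IsSemisimpleModule.eq_bot_or_exists_simple_le (LinearMap.range f) with h | ⟨S, hSle, hS⟩
      · exact absurd h hrange
      haveI : IsSimpleModule A ↥S := hS
      obtain ⟨T, hT⟩ := exists_isCompl S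
      set π := Submodule.linearProjOfIsCompl S T hT with hπ
      set q : N →ₗ[A] ↥S := π ∘ₗ f with hqdef
      have hq : Function.Surjective q := by
        intro s
        obtain ⟨y, hy⟩ := hSle s.2
        refine ⟨y, ?_⟩
        rw [hqdef, LinearMap.comp_apply, hy]
        exact Submodule.linearProjOfIsCompl_apply_left hT s
      obtain ⟨N', hN'⟩ := exists_isCompl (LinearMap.ker q)
      let eS : ↥N' ≃ₗ[A] ↥S :=
        (Submodule.quotientEquivOfIsCompl _ _ hN').symm.trans (q.quotKerEquivOfSurjective hq)
      haveI : FiniteDimensional k ↥S :=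
        FiniteDimensional.of_injective ((S.subtype).restrictScalars k) S.injective_subtype
      haveI : FiniteDimensional k ↥T :=
        FiniteDimensional.of_injective ((T.subtype).restrictScalars k) T.injective_subtype
      haveI : FiniteDimensional k ↥(LinearMap.ker q) :=
        FiniteDimensional.of_injective (((LinearMap.ker q).subtype).restrictScalars k)
          (LinearMap.ker q).injective_subtype
      haveI : FiniteDimensional k ↥N' :=
        FiniteDimensional.of_injective ((N'.subtype).restrictScalars k) N'.injective_subtype
      let eM : (↥S × ↥T) ≃ₗ[A] M := Submodule.prodEquivOfIsCompl S T hT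
      let eN0 : (↥(LinearMap.ker q) × ↥N') ≃ₗ[A] N := Submodule.prodEquivOfIsCompl _ _ hN'
      let eN : (↥S × ↥(LinearMap.ker q)) ≃ₗ[A] N :=
        ((eS.symm.prodCongr (LinearEquiv.refl A ↥(LinearMap.ker q))).trans
          ((LinearEquiv.prodComm A _ _).trans eN0))
      haveI : Nontrivial ↥S := IsSimpleModule.nontrivial A ↥S
      have hfr : finrank k M = finrank k ↥S + finrank k ↥T := by
        rw [← LinearEquiv.finrank_eq (eM.restrictScalars k), Module.finrank_prod]
      have hSpos : 0 < finrank k ↥S := Module.finrank_pos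
      have hTle : finrank k ↥T ≤ n := by omega
      have hyp' : ∀ (X : Type uA) [AddCommGroup X], ∀ [Module k X] [Module A X]
          [IsScalarTower k A X], ∀ [FiniteDimensional k X],
          finrank k (↥T →ₗ[A] X) = finrank k (↥(LinearMap.ker q) →ₗ[A] X) := by
        intro X _ _ _ _ _
        have h1 := finrank_hom_prod_eq (k := k) X eM
        have h2 := finrank_hom_prod_eq (k := k) X eN
        have h3 := hyp X
        omega
      obtain ⟨e'⟩ := ih ↥T ↥(LinearMap.ker q) hTle hyp'
      exact ⟨eM.symm.trans (((LinearEquiv.refl A ↥S).prodCongr e').trans eN)⟩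

end HomSpaces



section Maschke

variable {k : Type*} [Field k] {G : Type*} [Group G] [Fintype G]
variable [NeZero (Fintype.card G : k)]

theorem monoidAlgebra_isSemisimpleRing : IsSemisimpleRing (MonoidAlgebra k G) := by
  refine (isSemisimpleModule_iff _ _).2 ⟨?_⟩
  intro p
  -- choose a k-linear complement and projection
  obtain ⟨qk, hqk⟩ := Submodule.exists_isCompl (p.restrictScalars k)
  set π0 := Submodule.linearProjOfIsCompl _ _ hqk with hπ0
  set e0 : MonoidAlgebra k G →ₗ[k] MonoidAlgebra k G :=
    (p.restrictScalars k).subtype ∘ₗ π0 with he0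
  have he0mem : ∀ x, e0 x ∈ p := fun x => ((π0 x) : (p.restrictScalars k)).2
  have he0fix : ∀ x ∈ p, e0 x = x := fun x hx => by
    simp only [he0, LinearMap.comp_apply]
    exact congrArg Subtype.val (Submodule.linearProjOfIsCompl_apply_left hqk ⟨x, hx⟩)
  -- averaging
  set L : G → (MonoidAlgebra k G →ₗ[k] MonoidAlgebra k G) :=
    fun g => LinearMap.mulLeft k (single g (1 : k)) with hL
  set E : MonoidAlgebra k G →ₗ[k] MonoidAlgebra k G :=
    (Fintype.card G : k)⁻¹ • ∑ g : G, (L g) ∘ₗ e0 ∘ₗ (L g⁻¹) with hE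
  have hLg : ∀ (g : G) (x), L g x = single g (1 : k) * x := fun _ _ => rfl
  have hLmem : ∀ (g : G) (x), x ∈ p → L g x ∈ p := fun g x hx => by
    rw [hLg]
    exact p.smul_mem (single g (1 : k)) hx
  have hEmem : ∀ x, E x ∈ p := by
    intro x
    rw [hE]
    simp only [LinearMap.smul_apply, LinearMap.sum_apply, LinearMap.comp_apply]
    have hsum : (∑ g : G, (L g) (e0 ((L g⁻¹) x))) ∈ p :=
      Submodule.sum_mem p fun g _ => hLmem g _ (he0mem _)
    exact (Submodule.restrictScalars k p).smul_mem _ hsum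
  have hLL : ∀ (g h : G) (x), L g (L h x) = L (g * h) x := by
    intro g h x
    rw [hLg, hLg, hLg, ← mul_assoc, MonoidAlgebra.single_mul_single, one_mul]
  have hEfix : ∀ x ∈ p, E x = x := by
    intro x hx
    rw [hE]
    simp only [LinearMap.smul_apply, LinearMap.sum_apply, LinearMap.comp_apply]
    have : ∀ g : G, (g ∈ Finset.univ) → L g (e0 (L g⁻¹ x)) = x := by
      intro g _
      rw [he0fix _ (hLmem g⁻¹ x hx), hLL, mul_inv_cancel]
      rw [hLg, MonoidAlgebra.one_def.symm, one_mul]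
    rw [Finset.sum_congr rfl this, Finset.sum_const, Finset.card_univ, ← Nat.cast_smul_eq_nsmul k,
      smul_smul, inv_mul_cancel₀ (NeZero.ne _), one_smul]
  -- E commutes with left multiplication by group elements
  have hcomm : ∀ (s : G) (x), E (single s (1:k) * x) = single s (1:k) * E x := by
    intro s x
    rw [hE]
    simp only [LinearMap.smul_apply, LinearMap.sum_apply, LinearMap.comp_apply]
    rw [← hLg s x, mul_smul_comm, Finset.mul_sum]
    congr 1
    rw [← Equiv.sum_comp (Equiv.mulLeft s) (fun g => (L g) (e0 ((L g⁻¹) ((L s) x))))]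
    apply Finset.sum_congr rfl
    intro g _
    simp only [Equiv.coe_mulLeft]
    rw [hLL ((s*g)⁻¹) s x]
    have hsg : (s*g)⁻¹ * s = g⁻¹ := by group
    rw [hsg, ← hLg s, hLL]
  -- A-linearity
  have hmul : ∀ (a x : MonoidAlgebra k G), E (a * x) = a * E x := by
    intro a x
    induction a using MonoidAlgebra.induction_on with
    | of g => exact hcomm g x
    | add a b ha hb => rw [add_mul, map_add, ha, hb, add_mul]
    | smul c a ha => rw [smul_mul_assoc, map_smul, ha, smul_mul_assoc]
  let F : MonoidAlgebra k G →ₗ[MonoidAlgebra k G] p :=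
    { toFun := fun x => ⟨E x, hEmem x⟩
      map_add' := fun x y => Subtype.ext (by simp)
      map_smul' := fun a x => Subtype.ext (by simp [smul_eq_mul, hmul]) }
  have hF : ∀ x : p, F (x : MonoidAlgebra k G) = x := fun x =>
    Subtype.ext (hEfix _ x.2)
  exact ⟨LinearMap.ker F, LinearMap.isCompl_of_proj hF⟩

end Maschke



section Eps

variable {k : Type*} [Field k] {G : Type*} [Group G]

/-- the averaging idempotent of a subgroup -/
noncomputable def epsSub (H : Subgroup G) [Fintype ↥H] : MonoidAlgebra k G :=
  (Fintype.card ↥H : k)⁻¹ • ∑ h : ↥H, MonoidAlgebra.single (h : G) 1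

theorem epsSub_def (H : Subgroup G) [Fintype ↥H] :
    (epsSub H : MonoidAlgebra k G)
      = (Fintype.card ↥H : k)⁻¹ • ∑ h : ↥H, MonoidAlgebra.single (h : G) 1 := rfl

theorem single_mul_epsSub {H : Subgroup G} [Fintype ↥H] {g : G} (hg : g ∈ H) :
    MonoidAlgebra.single g (1 : k) * epsSub H = epsSub H := by
  simp only [epsSub_def, mul_smul_comm, Finset.mul_sum, MonoidAlgebra.single_mul_single, one_mul]
  congr 1
  exact Fintype.sum_equiv (Equiv.mulLeft (⟨g, hg⟩ : H)) _ _ (fun h => by simp)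

theorem epsSub_mul_epsSub [CharZero k] (H : Subgroup G) [Fintype ↥H] :
    (epsSub H : MonoidAlgebra k G) * epsSub H = epsSub H := by
  have hcard : ((Fintype.card ↥H : k)) ≠ 0 := Nat.cast_ne_zero.2 Fintype.card_ne_zero
  nth_rewrite 1 [epsSub_def]
  rw [smul_mul_assoc, Finset.sum_mul,
    Finset.sum_congr rfl (fun h _ => single_mul_epsSub h.2), Finset.sum_const,
    Finset.card_univ, ← Nat.cast_smul_eq_nsmul k, smul_smul, inv_mul_cancel₀ hcard, one_smul]

end Eps

section Counting

open scoped Classical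

variable {G : Type*} [Group G] [Fintype G]

/-- number of `x` conjugating `g` into `H` -/
noncomputable def conjCount (H : Subgroup G) (g : G) : ℕ :=
  (Finset.univ.filter fun x => x⁻¹ * g * x ∈ H).card

theorem conjCount_eq (H : Subgroup G) (g : G) :
    conjCount H g = Nat.card {y : G // y ∈ H ∧ IsConj g y} *
      (Finset.univ.filter fun x : G => x⁻¹ * g * x = g).card := by
  rw [Nat.card_eq_fintype_card, Fintype.card_subtype]
  set t := Finset.univ.filter (fun y => y ∈ H ∧ IsConj g y) with ht
  rw [conjCount, Finset.card_eq_sum_card_fiberwise (f := fun x => x⁻¹ * g * x) (t := t)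
    (fun x hx => by
      rw [ht, Finset.mem_coe, Finset.mem_filter]
      exact ⟨Finset.mem_univ _, (Finset.mem_filter.1 (Finset.mem_coe.1 hx)).2,
        isConj_iff.2 ⟨x⁻¹, by rw [inv_inv]⟩⟩)]
  have hfib : ∀ y ∈ t,
      ((Finset.univ.filter fun x => x⁻¹ * g * x ∈ H).filter fun x => x⁻¹ * g * x = y).card
        = (Finset.univ.filter fun x : G => x⁻¹ * g * x = g).card := by
    intro y hy
    simp only [ht, Finset.mem_filter, Finset.mem_univ, true_and] at hy
    obtain ⟨hyH, hconj⟩ := hy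
    obtain ⟨c, hc⟩ := isConj_iff.1 hconj
    refine Finset.card_bij' (fun x _ => x * c) (fun z _ => z * c⁻¹) ?_ ?_ ?_ ?_
    · intro x hx
      simp only [Finset.mem_filter, Finset.mem_univ, true_and] at hx ⊢
      obtain ⟨-, hxy⟩ := hx
      have : (x * c)⁻¹ * g * (x * c) = c⁻¹ * (x⁻¹ * g * x) * c := by group
      rw [this, hxy, ← hc]; group
    · intro z hz
      simp only [Finset.mem_filter, Finset.mem_univ, true_and] at hz ⊢
      have : (z * c⁻¹)⁻¹ * g * (z * c⁻¹) = c * (z⁻¹ * g * z) * c⁻¹ := by group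
      rw [this, hz]
      exact ⟨hc ▸ hyH, hc⟩
    · intro x _; group
    · intro z _; group
  rw [Finset.sum_congr rfl hfib, Finset.sum_const, smul_eq_mul]

theorem sum_conjCount_smul {M : Type*} [AddCommMonoid M] (H : Subgroup G) [Fintype ↥H]
    (χ : G → M) (hχ : ∀ x h : G, χ (x * h * x⁻¹) = χ h) :
    ∑ g : G, conjCount H g • χ g = Fintype.card G • ∑ h : ↥H, χ ↑h := by
  have h1 : ∀ g : G, conjCount H g • χ g
      = ∑ x : G, if x⁻¹ * g * x ∈ H then χ g else 0 := by
    intro g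
    rw [conjCount, ← Finset.sum_const, Finset.sum_filter]
  rw [Finset.sum_congr rfl (fun g _ => h1 g), Finset.sum_comm]
  have h2 : ∀ x : G, (∑ g : G, if x⁻¹ * g * x ∈ H then χ g else 0) = ∑ h : ↥H, χ ↑h := by
    intro x
    have hbij : Function.Bijective (fun h : G => x * h * x⁻¹) := by
      constructor
      · intro a b hab
        simp only at hab
        exact mul_left_cancel (mul_right_cancel hab)
      · intro g
        exact ⟨x⁻¹ * g * x, by group⟩
    have hstep : ∑ h : G, (if h ∈ H then χ h else 0)
        = ∑ g : G, if x⁻¹ * g * x ∈ H then χ g else 0 := by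
      refine Fintype.sum_bijective _ hbij _ _ ?_
      intro h
      have hx : x⁻¹ * (x * h * x⁻¹) * x = h := by group
      simp only [hx, hχ]
    rw [← hstep, ← Finset.sum_filter]
    exact Finset.sum_subtype _ (fun h => by simp) (fun h => χ h)
  rw [Finset.sum_congr rfl (fun x _ => h2 x), Finset.sum_const, Finset.card_univ]

end Counting



section Asmul

variable {k : Type*} [Field k] {A : Type*} [Ring A] [Algebra k A]
variable (X : Type*) [AddCommGroup X] [Module k X] [Module A X] [IsScalarTower k A X]

/-- scalar action of `a : A` as a `k`-linear endomorphism -/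
def asmul (k : Type*) {A : Type*} (X : Type*) [Field k] [Ring A] [Algebra k A]
    [AddCommGroup X] [Module k X] [Module A X] [IsScalarTower k A X] (a : A) : X →ₗ[k] X where
  toFun x := a • x
  map_add' := smul_add a
  map_smul' c x := smul_comm a c x

@[simp] theorem asmul_apply (a : A) (x : X) : asmul k X a x = a • x := rfl

theorem asmul_mul (a b : A) : asmul k X (a * b) = asmul k X a * asmul k X b := by
  ext x; simp [mul_smul]

theorem asmul_one : asmul k X (1 : A) = 1 := by ext x; simp

theorem asmul_smul (c : k) (a : A) : asmul k X (c • a) = c • asmul k X a := by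
  ext x; simp [smul_assoc]

theorem asmul_sum {ι : Type*} (s : Finset ι) (f : ι → A) :
    asmul k X (∑ i ∈ s, f i) = ∑ i ∈ s, asmul k X (f i) := by
  ext x; simp [Finset.sum_smul]

/-- dimension of the `A`-Hom space out of the cyclic module generated by an idempotent -/
theorem finrank_hom_span_idem (ε : A) (hid : ε * ε = ε) :
    finrank k (↥(Submodule.span A {ε}) →ₗ[A] X)
      = finrank k ↥(LinearMap.range (asmul k X ε)) := by
  have hmem : ε ∈ Submodule.span A {ε} := Submodule.mem_span_singleton_self ε
  set M := Submodule.span A {ε} with hM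
  set e : ↥M := ⟨ε, hmem⟩ with he
  have hsmul : ∀ m : ↥M, (↑m : A) • e = m := by
    intro m
    obtain ⟨c, hc⟩ := Submodule.mem_span_singleton.1 m.2
    refine Subtype.ext ?_
    show (↑m : A) * ε = ↑m
    rw [← hc]
    show c * ε * ε = c * ε
    rw [mul_assoc, hid]
  set Φ : (↥M →ₗ[A] X) →ₗ[k] X :=
    { toFun := fun f => f e
      map_add' := fun f g => rfl
      map_smul' := fun c f => rfl } with hΦ
  have hinj : Function.Injective Φ := by
    intro f g hfg
    ext m
    rw [← hsmul m, map_smul, map_smul]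
    show (↑m : A) • Φ f = (↑m : A) • Φ g
    rw [hfg]
  have hr : LinearMap.range Φ = LinearMap.range (asmul k X ε) := by
    apply le_antisymm
    · rintro _ ⟨f, rfl⟩
      refine ⟨f e, ?_⟩
      show ε • f e = Φ f
      rw [← map_smul f ε e, show ε • e = (↑e : A) • e from rfl, hsmul e]
      rfl
    · rintro _ ⟨y, rfl⟩
      exact ⟨(LinearMap.toSpanSingleton A X y) ∘ₗ M.subtype, rfl⟩
  rw [← hr]
  exact (LinearEquiv.ofInjective Φ hinj).finrank_eq

theorem cast_finrank_range_asmul (ε : A) (hid : ε * ε = ε) [FiniteDimensional k X] :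
    ((finrank k ↥(LinearMap.range (asmul k X ε))) : k) = LinearMap.trace k X (asmul k X ε) := by
  have hproj : IsProj (LinearMap.range (asmul k X ε)) (asmul k X ε) := by
    refine ⟨fun x => ⟨x, rfl⟩, ?_⟩
    rintro _ ⟨y, rfl⟩
    simp only [asmul_apply]
    rw [← mul_smul, hid]
  rw [hproj.trace]

end Asmul

section TraceEq

variable {k : Type*} [Field k] [CharZero k] {G : Type*} [Group G] [Fintype G]

theorem trace_asmul_epsSub_eq
    {H₁ H₂ : Subgroup G} [Fintype ↥H₁] [Fintype ↥H₂] (hac : AlmostConjugate H₁ H₂)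
    (X : Type*) [AddCommGroup X] [Module k X] [Module (MonoidAlgebra k G) X]
    [IsScalarTower k (MonoidAlgebra k G) X] [FiniteDimensional k X] :
    LinearMap.trace k X (asmul k X (epsSub H₁ : MonoidAlgebra k G))
      = LinearMap.trace k X (asmul k X (epsSub H₂ : MonoidAlgebra k G)) := by
  classical
  set χ : G → k := fun g => LinearMap.trace k X (asmul k X (MonoidAlgebra.single g (1 : k))) with hχdef
  have hχ : ∀ x h : G, χ (x * h * x⁻¹) = χ h := by
    intro x g
    have h1 : MonoidAlgebra.single (x * g * x⁻¹) (1 : k)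
        = MonoidAlgebra.single x 1 * MonoidAlgebra.single g 1 * MonoidAlgebra.single x⁻¹ 1 := by
      rw [MonoidAlgebra.single_mul_single, MonoidAlgebra.single_mul_single, one_mul, one_mul]
    have h2 : (MonoidAlgebra.single x⁻¹ (1 : k)) * MonoidAlgebra.single x 1 = 1 := by
      rw [MonoidAlgebra.single_mul_single, one_mul, inv_mul_cancel, ← MonoidAlgebra.one_def]
    show LinearMap.trace k X (asmul k X (MonoidAlgebra.single (x * g * x⁻¹) (1 : k))) = _
    rw [h1, asmul_mul, asmul_mul, LinearMap.trace_mul_comm, ← mul_assoc, ← asmul_mul, h2,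
      asmul_one, one_mul]
  have hcc : ∀ g : G, conjCount H₁ g = conjCount H₂ g := fun g => by
    rw [conjCount_eq, conjCount_eq, hac g]
  have hcard : Fintype.card ↥H₁ = Fintype.card ↥H₂ := by
    have k1 := sum_conjCount_smul H₁ (fun _ => (1 : ℕ)) (fun _ _ => rfl)
    have k2 := sum_conjCount_smul H₂ (fun _ => (1 : ℕ)) (fun _ _ => rfl)
    simp only [smul_eq_mul, mul_one, Finset.sum_const, Finset.card_univ] at k1 k2
    rw [Finset.sum_congr rfl (fun g _ => hcc g), k2] at k1
    exact (Nat.eq_of_mul_eq_mul_left Fintype.card_pos k1).symm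
  have hsum : ∑ h : ↥H₁, χ ↑h = ∑ h : ↥H₂, χ ↑h := by
    have e1 := sum_conjCount_smul H₁ χ hχ
    have e2 := sum_conjCount_smul H₂ χ hχ
    rw [Finset.sum_congr rfl (fun g _ => by rw [hcc g]), e2] at e1
    have hG : ((Fintype.card G : k)) ≠ 0 := Nat.cast_ne_zero.2 Fintype.card_ne_zero
    rw [← Nat.cast_smul_eq_nsmul k, ← Nat.cast_smul_eq_nsmul k, smul_eq_mul, smul_eq_mul] at e1
    exact (mul_left_cancel₀ hG e1).symm
  have hsum' := hsum
  simp only [hχdef] at hsum'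
  rw [epsSub_def, epsSub_def, asmul_smul, asmul_smul, map_smul, map_smul,
    asmul_sum, asmul_sum, map_sum, map_sum, hcard, hsum']

end TraceEq


/-- **Prasad–Rajan.**  Let `G` be a finite group with almost conjugate subgroups `H₁, H₂`,
let `k` be a field of characteristic zero and let `ρ` be a representation of `G` on a
`k`-vector space `V`.  Then there is a `k`-linear isomorphism `i : V^{H₁} ≃ V^{H₂}` commuting
with every endomorphism `Δ` of `V` that commutes with the `G`-action: whenever `v, w ∈ V^{H₁}`
satisfy `Δ v = w`, one has `Δ (i v) = i w`. -/
theorem invariants_equiv_of_almostConjugate {k G V : Type*} [Field k] [CharZero k]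
    [Group G] [Finite G] [AddCommGroup V] [Module k V]
    (ρ : Representation k G V) (H₁ H₂ : Subgroup G) (h : AlmostConjugate H₁ H₂) :
    ∃ i : (subInvariants ρ H₁) ≃ₗ[k] (subInvariants ρ H₂),
      ∀ Δ : V →ₗ[k] V, (∀ g : G, Δ ∘ₗ ρ g = ρ g ∘ₗ Δ) →
        ∀ (v w : subInvariants ρ H₁), Δ (v : V) = (w : V) →
          Δ ((i v : V)) = ((i w : V)) := by
  classical
  letI : Fintype G := Fintype.ofFinite G
  letI : Fintype ↥H₁ := Fintype.ofFinite _
  letI : Fintype ↥H₂ := Fintype.ofFinite _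
  haveI : NeZero ((Fintype.card G : k)) := ⟨Nat.cast_ne_zero.2 Fintype.card_ne_zero⟩
  haveI : IsSemisimpleRing (MonoidAlgebra k G) := monoidAlgebra_isSemisimpleRing
  haveI : Module.Finite k (MonoidAlgebra k G) :=
    Module.Finite.equiv
      ((Finsupp.linearEquivFunOnFinite k k G).symm.trans (MonoidAlgebra.coeffLinearEquiv k).symm : (G → k) ≃ₗ[k] MonoidAlgebra k G)
  have hid₁ : (epsSub H₁ : MonoidAlgebra k G) * epsSub H₁ = epsSub H₁ := epsSub_mul_epsSub H₁
  have hid₂ : (epsSub H₂ : MonoidAlgebra k G) * epsSub H₂ = epsSub H₂ := epsSub_mul_epsSub H₂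
  set M₁ := Submodule.span (MonoidAlgebra k G) {(epsSub H₁ : MonoidAlgebra k G)} with hM₁
  set M₂ := Submodule.span (MonoidAlgebra k G) {(epsSub H₂ : MonoidAlgebra k G)} with hM₂
  haveI : FiniteDimensional k ↥M₁ :=
    FiniteDimensional.of_injective ((M₁.subtype).restrictScalars k) M₁.injective_subtype
  haveI : FiniteDimensional k ↥M₂ :=
    FiniteDimensional.of_injective ((M₂.subtype).restrictScalars k) M₂.injective_subtype
  obtain ⟨σ⟩ := iso_of_hom_finrank (k := k) (A := MonoidAlgebra k G)
    (finrank k ↥M₁) ↥M₁ ↥M₂ le_rfl (by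
      intro X _ _ _ _ _
      rw [hM₁, hM₂, finrank_hom_span_idem (k := k) X _ hid₁,
        finrank_hom_span_idem (k := k) X _ hid₂]
      have c1 := cast_finrank_range_asmul (k := k) X _ hid₁
      have c2 := cast_finrank_range_asmul (k := k) X _ hid₂
      have ct := trace_asmul_epsSub_eq (k := k) h X
      exact_mod_cast c1.trans (ct.trans c2.symm))
  -- extract the intertwining elements a and b
  have hmm₁ : (epsSub H₁ : MonoidAlgebra k G) ∈ M₁ := Submodule.mem_span_singleton_self _
  have hmm₂ : (epsSub H₂ : MonoidAlgebra k G) ∈ M₂ := Submodule.mem_span_singleton_self _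
  have hsm₁ : ∀ m : ↥M₁, (↑m : MonoidAlgebra k G) • (⟨epsSub H₁, hmm₁⟩ : ↥M₁) = m := by
    intro m
    obtain ⟨c, hc⟩ := Submodule.mem_span_singleton.1 m.2
    refine Subtype.ext ?_
    show (↑m : MonoidAlgebra k G) * (epsSub H₁ : MonoidAlgebra k G) = (↑m : MonoidAlgebra k G)
    rw [← hc]
    show c * epsSub H₁ * epsSub H₁ = c * epsSub H₁
    rw [mul_assoc, hid₁]
  have hsm₂ : ∀ m : ↥M₂, (↑m : MonoidAlgebra k G) • (⟨epsSub H₂, hmm₂⟩ : ↥M₂) = m := by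
    intro m
    obtain ⟨c, hc⟩ := Submodule.mem_span_singleton.1 m.2
    refine Subtype.ext ?_
    show (↑m : MonoidAlgebra k G) * (epsSub H₂ : MonoidAlgebra k G) = (↑m : MonoidAlgebra k G)
    rw [← hc]
    show c * epsSub H₂ * epsSub H₂ = c * epsSub H₂
    rw [mul_assoc, hid₂]
  set b : MonoidAlgebra k G := ↑(σ ⟨epsSub H₁, hmm₁⟩) with hbdef
  set a : MonoidAlgebra k G := ↑(σ.symm ⟨epsSub H₂, hmm₂⟩) with hadef
  have key₁ : ∀ m : ↥M₁, (↑(σ m) : MonoidAlgebra k G) = ↑m * b := by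
    intro m
    conv_lhs => rw [← hsm₁ m, map_smul]
    rfl
  have key₂ : ∀ m : ↥M₂, (↑(σ.symm m) : MonoidAlgebra k G) = ↑m * a := by
    intro m
    conv_lhs => rw [← hsm₂ m, map_smul]
    rfl
  have hba : b * a = epsSub H₁ := by
    have h0 := key₂ (σ ⟨epsSub H₁, hmm₁⟩)
    rw [LinearEquiv.symm_apply_apply] at h0
    exact h0.symm
  have hab : a * b = epsSub H₂ := by
    have h0 := key₁ (σ.symm ⟨epsSub H₂, hmm₂⟩)
    rw [LinearEquiv.apply_symm_apply] at h0
    exact h0.symm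
  have haε : (epsSub H₂ : MonoidAlgebra k G) * a = a := by
    have h0 : σ.symm ⟨epsSub H₂, hmm₂⟩
        = (epsSub H₂ : MonoidAlgebra k G) • σ.symm ⟨epsSub H₂, hmm₂⟩ := by
      conv_lhs => rw [← hsm₂ ⟨epsSub H₂, hmm₂⟩, map_smul]
    exact (congrArg Subtype.val h0).symm
  have hbε : (epsSub H₁ : MonoidAlgebra k G) * b = b := by
    have h0 : σ ⟨epsSub H₁, hmm₁⟩
        = (epsSub H₁ : MonoidAlgebra k G) • σ ⟨epsSub H₁, hmm₁⟩ := by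
      conv_lhs => rw [← hsm₁ ⟨epsSub H₁, hmm₁⟩, map_smul]
    exact (congrArg Subtype.val h0).symm
  -- the representation as an algebra morphism
  set π : MonoidAlgebra k G →ₐ[k] Module.End k V :=
    (MonoidAlgebra.lift k (Module.End k V) G) ρ with hπdef
  have hπsingle : ∀ g : G, π (MonoidAlgebra.single g 1) = ρ g := by
    intro g
    rw [hπdef, MonoidAlgebra.lift_single, one_smul]
  have hπeps : ∀ (H : Subgroup G) [Fintype ↥H], ∀ u : V,
      (∀ hh : ↥H, ρ ↑hh u = u) → π (epsSub H) u = u := by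
    intro H _ u hu
    have hexp : π (epsSub H) = (Fintype.card ↥H : k)⁻¹ • ∑ hh : ↥H, ρ (↑hh : G) := by
      rw [epsSub_def, map_smul, map_sum]
      congr 1
      exact Finset.sum_congr rfl fun hh _ => hπsingle ↑hh
    rw [hexp]
    rw [LinearMap.smul_apply, LinearMap.sum_apply,
      Finset.sum_congr rfl (fun hh _ => hu hh), Finset.sum_const, Finset.card_univ,
      ← Nat.cast_smul_eq_nsmul k, smul_smul,
      inv_mul_cancel₀ (Nat.cast_ne_zero.2 Fintype.card_ne_zero), one_smul]
  have hmapa : ∀ u : V, u ∈ subInvariants ρ H₁ → π a u ∈ subInvariants ρ H₂ := by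
    intro u _
    rw [subInvariants, Representation.mem_invariants]
    intro hh
    have hone : MonoidAlgebra.single ((hh : G)) (1 : k) * a = a := by
      rw [← haε, ← mul_assoc, single_mul_epsSub hh.2]
    show ρ ↑hh (π a u) = π a u
    rw [← hπsingle ↑hh, ← Module.End.mul_apply, ← map_mul, hone]
  have hmapb : ∀ u : V, u ∈ subInvariants ρ H₂ → π b u ∈ subInvariants ρ H₁ := by
    intro u _
    rw [subInvariants, Representation.mem_invariants]
    intro hh
    have hone : MonoidAlgebra.single ((hh : G)) (1 : k) * b = b := by
      rw [← hbε, ← mul_assoc, single_mul_epsSub hh.2]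
    show ρ ↑hh (π b u) = π b u
    rw [← hπsingle ↑hh, ← Module.End.mul_apply, ← map_mul, hone]
  set iAB : ↥(subInvariants ρ H₁) →ₗ[k] ↥(subInvariants ρ H₂) :=
    LinearMap.restrict (π a) hmapa with hiAB
  set jBA : ↥(subInvariants ρ H₂) →ₗ[k] ↥(subInvariants ρ H₁) :=
    LinearMap.restrict (π b) hmapb with hjBA
  have hij : ∀ w : ↥(subInvariants ρ H₂), π a (π b ↑w) = ↑w := by
    intro w
    rw [← Module.End.mul_apply, ← map_mul, hab]
    exact hπeps H₂ ↑w fun hh => (Representation.mem_invariants _ _).1 w.2 hh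
  have hji : ∀ v : ↥(subInvariants ρ H₁), π b (π a ↑v) = ↑v := by
    intro v
    rw [← Module.End.mul_apply, ← map_mul, hba]
    exact hπeps H₁ ↑v fun hh => (Representation.mem_invariants _ _).1 v.2 hh
  refine ⟨LinearEquiv.ofLinear iAB jBA
    (LinearMap.ext fun w => Subtype.ext (hij w))
    (LinearMap.ext fun v => Subtype.ext (hji v)), ?_⟩
  intro Δ hΔ v w hvw
  have hcomm : ∀ (x : MonoidAlgebra k G) (u : V), Δ (π x u) = π x (Δ u) := by
    intro x u
    induction x using MonoidAlgebra.induction_on with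
    | of g =>
      rw [show MonoidAlgebra.of k G g = MonoidAlgebra.single g (1 : k) from rfl, hπsingle]
      have h0 := hΔ g
      rw [LinearMap.ext_iff] at h0
      exact h0 u
    | add p q hp hq => rw [map_add, LinearMap.add_apply, map_add, hp, hq, LinearMap.add_apply]
    | smul c p hp => rw [map_smul, LinearMap.smul_apply, map_smul, hp, LinearMap.smul_apply]
  show Δ (π a ↑v) = π a ↑w
  rw [hcomm a ↑v, hvw]
end

section
/- Let p be a prime with p ≡ 5 (mod 168), let f be a positive integer with gcd(f, 3) = 1, and set N = (p^{3f} − p^{f})/2. Then the subgroup of PSL(2, 7) generated by the set of N-th powers {g^N : g ∈ PSL(2, 7)} is all of PSL(2, 7). -/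
open Matrix
open scoped MatrixGroups

namespace PSL27aux

local notation "F" => ZMod 7

instance : Fact (Nat.Prime 7) := ⟨by norm_num⟩

/-- upper unipotent -/
def u (c : F) : SpecialLinearGroup (Fin 2) F :=
  ⟨!![1, c; 0, 1], by simp [Matrix.det_fin_two_of]⟩

/-- lower unipotent -/
def l (c : F) : SpecialLinearGroup (Fin 2) F :=
  ⟨!![1, 0; c, 1], by simp [Matrix.det_fin_two_of]⟩

lemma u_mul (x y : F) : u x * u y = u (x + y) := by
  apply Subtype.ext
  rw [Matrix.SpecialLinearGroup.coe_mul]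
  simp [u, Matrix.mul_fin_two]
  try ring

lemma l_mul (x y : F) : l x * l y = l (x + y) := by
  apply Subtype.ext
  rw [Matrix.SpecialLinearGroup.coe_mul]
  simp [l, Matrix.mul_fin_two]
  try ring

lemma u_zero : u 0 = 1 := by
  apply Subtype.ext
  simp [u, Matrix.one_fin_two]

lemma l_zero : l 0 = 1 := by
  apply Subtype.ext
  simp [l, Matrix.one_fin_two]

lemma u_pow_seven (c : F) : u c ^ 7 = 1 := by
  have h : c + c + c + c + c + c + c = 0 := by
    have h7 : (7 : F) = 0 := by decide
    linear_combination c * h7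
  calc u c ^ 7 = u (c + c + c + c + c + c + c) := by
        simp [pow_succ, u_mul]
    _ = 1 := by rw [h, u_zero]

lemma l_pow_seven (c : F) : l c ^ 7 = 1 := by
  have h : c + c + c + c + c + c + c = 0 := by
    have h7 : (7 : F) = 0 := by decide
    linear_combination c * h7
  calc l c ^ 7 = l (c + c + c + c + c + c + c) := by
        simp [pow_succ, l_mul]
    _ = 1 := by rw [h, l_zero]

/-- The generating set of unipotents. -/
def gens : Set (SpecialLinearGroup (Fin 2) F) :=
  {x | (∃ c, x = u c) ∨ (∃ c, x = l c)}

lemma decomp (A : SpecialLinearGroup (Fin 2) F) (hc : A.1 1 0 ≠ 0) :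
    A = u ((A.1 0 0 - 1) * (A.1 1 0)⁻¹) * l (A.1 1 0) *
        u ((A.1 1 1 - 1) * (A.1 1 0)⁻¹) := by
  have hdet : A.1 0 0 * A.1 1 1 - A.1 0 1 * A.1 1 0 = 1 := by
    have h := A.2
    rwa [Matrix.det_fin_two] at h
  apply Subtype.ext
  ext i j
  rw [Matrix.SpecialLinearGroup.coe_mul, Matrix.SpecialLinearGroup.coe_mul]
  simp only [u, l, Matrix.mul_fin_two]
  fin_cases i <;> fin_cases j <;>
    simp only [Matrix.cons_val', Matrix.cons_val_zero, Matrix.cons_val_one, Matrix.head_cons,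
      Matrix.head_fin_const, Matrix.empty_val', Matrix.cons_val_fin_one, Matrix.of_apply,
      Fin.isValue, Fin.zero_eta, Fin.mk_one] <;>
    field_simp <;>
    first
      | ring1
      | linear_combination (A.1 1 0) * hdet
      | linear_combination (-(1 + A.1 1 0)) * hdet
      | linear_combination (1 + A.1 1 0) * hdet
      | linear_combination hdet
      | linear_combination -hdet
      | linear_combination (-1 : ZMod 7) * hdet

lemma mem_closure_gens (A : SpecialLinearGroup (Fin 2) F) :
    A ∈ Subgroup.closure gens := by
  have hu : ∀ c, u c ∈ Subgroup.closure gens := fun c =>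
    Subgroup.subset_closure (Or.inl ⟨c, rfl⟩)
  have hl : ∀ c, l c ∈ Subgroup.closure gens := fun c =>
    Subgroup.subset_closure (Or.inr ⟨c, rfl⟩)
  by_cases hc : A.1 1 0 ≠ 0
  · rw [decomp A hc]
    exact mul_mem (mul_mem (hu _) (hl _)) (hu _)
  · push_neg at hc
    have hB : (A * l 1).1 1 0 ≠ 0 := by
      have h := A.2
      rw [Matrix.det_fin_two] at h
      have hent : (A * l 1).1 1 0 = A.1 1 1 := by
        rw [Matrix.SpecialLinearGroup.coe_mul]
        simp [l, Matrix.SpecialLinearGroup.coe_mul, Matrix.mul_apply, Fin.sum_univ_two, hc]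
      rw [hent]
      intro h0
      rw [hc, h0] at h
      simp at h
    have hmem : A * l 1 ∈ Subgroup.closure gens := by
      rw [decomp (A * l 1) hB]
      exact mul_mem (mul_mem (hu _) (hl _)) (hu _)
    have hA : A = (A * l 1) * (l 1)⁻¹ := by group
    rw [hA]
    exact mul_mem hmem (inv_mem (hl 1))

end PSL27aux

/-- If `p` is a prime with `p ≡ 5 (mod 168)`, `f` is a positive integer with `gcd(f,3) = 1`
and `N = (p^(3f) - p^f) / 2`, then `PSL(2, 7)` is generated by the `N`-th powers of its
elements. -/
theorem PSL27_generated_by_N_powers (p f N : ℕ) (hp : p.Prime) (hp5 : p % 168 = 5)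
    (hf : 0 < f) (hf3 : Nat.gcd f 3 = 1) (hN : N = (p ^ (3 * f) - p ^ f) / 2) :
    Subgroup.closure {x : PSL(2, ZMod 7) | ∃ g : PSL(2, ZMod 7), x = g ^ N} = ⊤ := by
  classical
  -- `7` does not divide `N`
  have hple : p ^ f ≤ p ^ (3 * f) :=
    Nat.pow_le_pow_right hp.one_lt.le (by omega)
  have hpodd : p % 2 = 1 := by omega
  have heven : 2 ∣ p ^ (3 * f) - p ^ f := by
    have h1 : p ^ (3 * f) % 2 = 1 := Nat.pow_mod p (3*f) 2 ▸ by simp [hpodd]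
    have h2 : p ^ f % 2 = 1 := Nat.pow_mod p f 2 ▸ by simp [hpodd]
    omega
  have h2N : 2 * N = p ^ (3 * f) - p ^ f := by
    rw [hN]; omega
  have hp7 : (p : ZMod 7) = 5 := by
    have hmod : p % 7 = 5 := by omega
    rw [← ZMod.natCast_mod p 7, hmod]
    rfl
  have hf3' : f % 3 ≠ 0 := by
    intro h
    exact absurd (hf3 ▸ Nat.dvd_gcd (Nat.dvd_of_mod_eq_zero h) dvd_rfl) (by norm_num)
  have h4f : (4 : ZMod 7) ^ f = 4 ^ (f % 3) := by
    conv_lhs => rw [← Nat.div_add_mod f 3]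
    rw [pow_add, pow_mul]
    have h43 : (4 : ZMod 7) ^ 3 = 1 := by decide
    rw [h43, one_pow, one_mul]
  have hN7 : ¬ (7 ∣ N) := by
    intro hdvd
    have hz : ((N : ℕ) : ZMod 7) = 0 := (ZMod.natCast_eq_zero_iff N 7).mpr hdvd
    have hcast : ((2 * N : ℕ) : ZMod 7) = 0 := by push_cast [hz]; ring
    rw [h2N, Nat.cast_sub hple] at hcast
    push_cast at hcast
    rw [hp7] at hcast
    have hexp : (5 : ZMod 7) ^ (3 * f) = 5 ^ f * 4 ^ f := by
      have h53 : (5 : ZMod 7) ^ 3 = 5 * 4 := by decide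
      rw [pow_mul, h53, mul_pow]
    rw [hexp] at hcast
    have h5f : (5 : ZMod 7) ^ f ≠ 0 := pow_ne_zero _ (by decide)
    have h41 : (4 : ZMod 7) ^ f ≠ 1 := by
      rw [h4f]
      have : f % 3 < 3 := Nat.mod_lt f (by norm_num)
      interval_cases h : f % 3 <;> simp_all <;> decide
    apply h41
    have hmz : (5 : ZMod 7) ^ f * (4 ^ f - 1) = 0 := by linear_combination hcast
    rcases mul_eq_zero.mp hmz with h | h
    · exact absurd h h5f
    · linear_combination h
  -- elements of order dividing `7` are `N`-th powers
  have hNcop : Nat.Coprime N 7 :=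
    Nat.coprime_comm.mp ((Nat.Prime.coprime_iff_not_dvd (by norm_num)).mpr hN7)
  obtain ⟨m, -, hm⟩ := Nat.exists_mul_mod_eq_one_of_coprime hNcop (by norm_num)
  have key : ∀ g : PSL(2, ZMod 7), g ^ 7 = 1 →
      g ∈ Subgroup.closure {x : PSL(2, ZMod 7) | ∃ g : PSL(2, ZMod 7), x = g ^ N} := by
    intro g hg
    have h1 : g ^ (N * m) = g := by
      conv_lhs => rw [← Nat.div_add_mod (N * m) 7]
      rw [pow_add, pow_mul, hg, one_pow, one_mul, hm, pow_one]
    have h2 : g = (g ^ m) ^ N := by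
      rw [← pow_mul, mul_comm m N, h1]
    exact Subgroup.subset_closure ⟨g ^ m, h2⟩
  -- conclude
  rw [eq_top_iff]
  intro x _
  obtain ⟨A, rfl⟩ := QuotientGroup.mk'_surjective
    (Subgroup.center (SpecialLinearGroup (Fin 2) (ZMod 7))) x
  have hA := PSL27aux.mem_closure_gens A
  refine Subgroup.closure_induction
    (p := fun g _ => (QuotientGroup.mk' (Subgroup.center (SpecialLinearGroup (Fin 2) (ZMod 7)))) g ∈
      Subgroup.closure {x : PSL(2, ZMod 7) | ∃ g : PSL(2, ZMod 7), x = g ^ N})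
    ?_ ?_ ?_ ?_ hA
  · intro y hy
    have h7 : (QuotientGroup.mk' (Subgroup.center (SpecialLinearGroup (Fin 2) (ZMod 7))) y) ^ 7
        = 1 := by
      rw [← _root_.map_pow]
      rcases hy with ⟨c, rfl⟩ | ⟨c, rfl⟩
      · rw [PSL27aux.u_pow_seven, _root_.map_one]
      · rw [PSL27aux.l_pow_seven, _root_.map_one]
    exact key _ h7
  · show (QuotientGroup.mk' (Subgroup.center (SpecialLinearGroup (Fin 2) (ZMod 7)))) 1 ∈ _
    rw [_root_.map_one]
    exact one_mem _
  · intro a b _ _ ha hb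
    show (QuotientGroup.mk' (Subgroup.center (SpecialLinearGroup (Fin 2) (ZMod 7)))) (a * b) ∈ _
    rw [_root_.map_mul]
    exact mul_mem ha hb
  · intro a _ ha
    show (QuotientGroup.mk' (Subgroup.center (SpecialLinearGroup (Fin 2) (ZMod 7)))) a⁻¹ ∈ _
    rw [_root_.map_inv]
    exact inv_mem ha
end
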